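/- For 4 × 4 real matrices A, B define P(A, B) := Σ_{τ ∈ S_4} sgn(τ) ( A_{τ(1)τ(2)} B_{τ(3)τ(4)} + A_{τ(3)τ(4)} B_{τ(1)τ(2)} ), where A_{ij} denotes the (i,j) entry. Then for all h_1, h_2 ∈ SO(4) (i.e. h^T h = I and det h = 1) and all skew-symmetric 4 × 4 real matrices X, B_1, B_2: −(1/64π²) [ P( X − h_1^{-1} X h_1 , h_2 B_2 h_2^{-1} ) − P( B_1 , h_2 X h_2^{-1} − X ) ] = (1/64π²) [ −P(X, h_2 B_2 h_2^{-1}) + P(X, h_2^{-1} B_1 h_2) + P(X, h_1 h_2 B_2 h_2^{-1} h_1^{-1}) − P(X, B_1) ]. -/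

import Mathlib

/-!
Writing `Q(A, B) = Σ_τ sgn τ A_{τ0 τ1} B_{τ2 τ3}`, so that `P(A, B) = Q(A, B) + Q(B, A)`, the
contraction of `Q(g A gᵀ, g B gᵀ)` against the sign of `τ` produces, for every choice of
indices `i j k l`, the determinant of the matrix with columns `g e_i, g e_j, g e_k, g e_l`, which
is `det g` times that of `e_i, e_j, e_k, e_l`. Hence `P(g A gᵀ, g B gᵀ) = det g · P(A, B)` for
all matrices, and for `g ∈ SO(4)` the form `P` is invariant under conjugation. Expanding both
sides bilinearly, the identity then reduces to `P(h₁⁻¹ X h₁, C) = P(X, h₁ C h₁⁻¹)` and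
`P(B₁, h₂ X h₂⁻¹) = P(h₂⁻¹ B₁ h₂, X)`.
-/

open Matrix Real

/-- The polarized Pfaffian-type form on 4 × 4 matrices:
`P(A, B) = Σ_{τ ∈ S₄} sgn(τ) (A_{τ(1)τ(2)} B_{τ(3)τ(4)} + A_{τ(3)τ(4)} B_{τ(1)τ(2)})`
(indices written 0-based). -/
noncomputable def Pform (A B : Matrix (Fin 4) (Fin 4) ℝ) : ℝ :=
  ∑ τ : Equiv.Perm (Fin 4),
    ((Equiv.Perm.sign τ : ℤ) : ℝ) *
      (A (τ 0) (τ 1) * B (τ 2) (τ 3) + A (τ 2) (τ 3) * B (τ 0) (τ 1))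

section Determinant

variable {R : Type*} [CommRing R] {ι : Type*} [Fintype ι]

theorem det_submatrix_id_eq_det_mul [DecidableEq ι] (g : Matrix ι ι R) (v : ι → ι) :
    (g.submatrix id v).det = g.det * ((1 : Matrix ι ι R).submatrix id v).det := by
  rw [← det_mul]
  exact congrArg det (mul_submatrix_one (Equiv.refl ι) v g).symm

theorem mul_mul_transpose_apply (g A : Matrix ι ι R) (a b : ι) :
    (g * A * gᵀ) a b = ∑ i, ∑ j, g a i * A i j * g b j := by
  rw [Matrix.mul_assoc, mul_apply]
  simp only [mul_apply, transpose_apply, Finset.mul_sum, _root_.mul_assoc]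

end Determinant

section PfaffPairing

variable {R : Type*} [CommRing R]

noncomputable def pfaffPairing (A B : Matrix (Fin 4) (Fin 4) R) : R :=
  ∑ τ : Equiv.Perm (Fin 4), ((Equiv.Perm.sign τ : ℤ) : R) * (A (τ 0) (τ 1) * B (τ 2) (τ 3))

theorem pfaffPairing_mul_mul_transpose_eq_sum (g A B : Matrix (Fin 4) (Fin 4) R) :
    pfaffPairing (g * A * gᵀ) (g * B * gᵀ)
      = ∑ i, ∑ j, ∑ k, ∑ l, A i j * B k l * (g.submatrix id ![i, j, k, l]).det := by
  simp only [pfaffPairing, mul_mul_transpose_apply, Finset.sum_mul_sum]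
  simp only [Finset.mul_sum, Finset.sum_comm (s := (Finset.univ : Finset (Equiv.Perm (Fin 4))))]
  refine Finset.sum_congr rfl fun i _ => Finset.sum_comm.trans ?_
  simp only [det_apply, Finset.mul_sum, Fin.prod_univ_four, submatrix_apply, id, Units.smul_def,
    zsmul_eq_mul, cons_val_zero, cons_val_one, cons_val_two, cons_val_three, vecHead, vecTail,
    Function.comp_apply, Fin.succ_zero_eq_one, Fin.succ_one_eq_two]
  refine Fintype.sum_congr _ _ fun j => Fintype.sum_congr _ _ fun k =>
    Fintype.sum_congr _ _ fun l => Fintype.sum_congr _ _ fun τ => by ring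

theorem pfaffPairing_mul_mul_transpose (g A B : Matrix (Fin 4) (Fin 4) R) :
    pfaffPairing (g * A * gᵀ) (g * B * gᵀ) = g.det * pfaffPairing A B := by
  have h_one := pfaffPairing_mul_mul_transpose_eq_sum 1 A B
  rw [Matrix.one_mul, Matrix.one_mul, transpose_one, Matrix.mul_one, Matrix.mul_one] at h_one
  simp only [pfaffPairing_mul_mul_transpose_eq_sum, h_one, det_submatrix_id_eq_det_mul g,
    Finset.mul_sum, mul_left_comm]

end PfaffPairing

theorem Pform_eq_pfaffPairing_add (A B : Matrix (Fin 4) (Fin 4) ℝ) :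
    Pform A B = pfaffPairing A B + pfaffPairing B A := by
  rw [Pform, pfaffPairing, pfaffPairing, ← Finset.sum_add_distrib]
  exact Fintype.sum_congr _ _ fun τ => by ring

theorem Pform_comm (A B : Matrix (Fin 4) (Fin 4) ℝ) : Pform A B = Pform B A := by
  rw [Pform_eq_pfaffPairing_add, Pform_eq_pfaffPairing_add, add_comm]

theorem Pform_sub_left (A B C : Matrix (Fin 4) (Fin 4) ℝ) :
    Pform (A - B) C = Pform A C - Pform B C := by
  rw [Pform, Pform, Pform, ← Finset.sum_sub_distrib]
  exact Fintype.sum_congr _ _ fun τ => by simp only [Matrix.sub_apply]; ring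

theorem Pform_sub_right (A B C : Matrix (Fin 4) (Fin 4) ℝ) :
    Pform A (B - C) = Pform A B - Pform A C := by
  rw [Pform_comm, Pform_sub_left, Pform_comm B, Pform_comm C]

theorem Pform_mul_mul_transpose (g A B : Matrix (Fin 4) (Fin 4) ℝ) :
    Pform (g * A * gᵀ) (g * B * gᵀ) = g.det * Pform A B := by
  simp only [Pform_eq_pfaffPairing_add, pfaffPairing_mul_mul_transpose, mul_add]

theorem Pform_inv_mul_mul_eq_mul_mul_inv {g : Matrix (Fin 4) (Fin 4) ℝ} (hg : gᵀ * g = 1)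
    (hdet : g.det = 1) (A B : Matrix (Fin 4) (Fin 4) ℝ) :
    Pform (g⁻¹ * A * g) B = Pform A (g * B * g⁻¹) := by
  have hg' : g * gᵀ = 1 := mul_eq_one_comm.mp hg
  rw [inv_eq_left_inv hg, ← one_mul (Pform (gᵀ * A * g) B), ← hdet, ← Pform_mul_mul_transpose]
  congr 1
  simp only [← Matrix.mul_assoc, hg', Matrix.one_mul]
  rw [Matrix.mul_assoc, hg', Matrix.mul_one]

theorem contraction_E22_eq_pullback_mu_general (h₁ h₂ X B₁ B₂ : Matrix (Fin 4) (Fin 4) ℝ)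
    (hh₁ : h₁ᵀ * h₁ = 1) (hdet₁ : h₁.det = 1)
    (hh₂ : h₂ᵀ * h₂ = 1) (hdet₂ : h₂.det = 1) :
    -(1 / (64 * π ^ 2)) *
        (Pform (X - h₁⁻¹ * X * h₁) (h₂ * B₂ * h₂⁻¹) - Pform B₁ (h₂ * X * h₂⁻¹ - X))
      = (1 / (64 * π ^ 2)) *
          (-Pform X (h₂ * B₂ * h₂⁻¹) + Pform X (h₂⁻¹ * B₁ * h₂)
            + Pform X (h₁ * h₂ * B₂ * h₂⁻¹ * h₁⁻¹) - Pform X B₁) := by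
  have conj₁ :
      Pform (h₁⁻¹ * X * h₁) (h₂ * B₂ * h₂⁻¹) = Pform X (h₁ * h₂ * B₂ * h₂⁻¹ * h₁⁻¹) := by
    rw [Pform_inv_mul_mul_eq_mul_mul_inv hh₁ hdet₁]
    simp only [Matrix.mul_assoc]
  have conj₂ : Pform B₁ (h₂ * X * h₂⁻¹) = Pform X (h₂⁻¹ * B₁ * h₂) := by
    rw [← Pform_inv_mul_mul_eq_mul_mul_inv hh₂ hdet₂, Pform_comm]
  rw [Pform_sub_left, Pform_sub_right, conj₁, conj₂, Pform_comm B₁]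
  ring

/-- Lemma 4.7 (pointwise form): `i_{X_{G×G}} E_{2,2} = (ε₀* − ε₁* + ε₂*) μ(X)` on
`SO(4)`, evaluated at `(h₁, h₂)` on the tangent vector `(h₁ B₁, h₂ B₂)`. -/
theorem contraction_E22_eq_pullback_mu (h₁ h₂ X B₁ B₂ : Matrix (Fin 4) (Fin 4) ℝ)
    (hh₁ : h₁ᵀ * h₁ = 1) (hdet₁ : h₁.det = 1)
    (hh₂ : h₂ᵀ * h₂ = 1) (hdet₂ : h₂.det = 1)
    (hX : Xᵀ = -X) (hB₁ : B₁ᵀ = -B₁) (hB₂ : B₂ᵀ = -B₂) :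
    -(1 / (64 * π ^ 2)) *
        (Pform (X - h₁⁻¹ * X * h₁) (h₂ * B₂ * h₂⁻¹) - Pform B₁ (h₂ * X * h₂⁻¹ - X))
      = (1 / (64 * π ^ 2)) *
          (-Pform X (h₂ * B₂ * h₂⁻¹) + Pform X (h₂⁻¹ * B₁ * h₂)
            + Pform X (h₁ * h₂ * B₂ * h₂⁻¹ * h₁⁻¹) - Pform X B₁) :=
  contraction_E22_eq_pullback_mu_general h₁ h₂ X B₁ B₂ hh₁ hdet₁ hh₂ hdet₂
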